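/- Let K be a compact subset of ℂ such that ℂ \ K is connected, and let p ∉ K. Then there exists a polynomial f with |f(p)| > sup_{z ∈ K} |f(z)|; that is, K is polynomially convex. -/
import Mathlib

open Polynomial Metric

noncomputable def polySup (K : Set ℂ) (f : ℂ[X]) : ℝ :=
  sSup ((fun z => ‖f.eval z‖) '' K)

lemma polySup_bddAbove (K : Set ℂ) (hK : IsCompact K) (f : ℂ[X]) :
    BddAbove ((fun z => ‖f.eval z‖) '' K) :=
  (hK.image (by continuity)).bddAbove

lemma le_polySup (K : Set ℂ) (hK : IsCompact K) (f : ℂ[X]) {z : ℂ} (hz : z ∈ K) :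
    ‖f.eval z‖ ≤ polySup K f :=
  le_csSup (polySup_bddAbove K hK f) ⟨z, hz, rfl⟩

lemma polySup_le (K : Set ℂ) (hne : K.Nonempty) {f : ℂ[X]} {C : ℝ}
    (h : ∀ z ∈ K, ‖f.eval z‖ ≤ C) : polySup K f ≤ C := by
  apply Real.sSup_le
  · rintro x ⟨z, hz, rfl⟩; exact h z hz
  · obtain ⟨z, hz⟩ := hne; exact le_trans (norm_nonneg _) (h z hz)

lemma polySup_nonneg (K : Set ℂ) (hK : IsCompact K) (hne : K.Nonempty) (f : ℂ[X]) :
    0 ≤ polySup K f := by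
  obtain ⟨z, hz⟩ := hne
  exact le_trans (norm_nonneg _) (le_polySup K hK f hz)

/-- Key pushing lemma: if `q` is in the polynomial hull and `w` is closer to `q`
than to `K`, then `w` is in the hull. -/
lemma key (K : Set ℂ) (hK : IsCompact K) (hne : K.Nonempty)
    {q w : ℂ} (hq : ∀ f : ℂ[X], ‖f.eval q‖ ≤ polySup K f)
    (hd : ‖w - q‖ < Metric.infDist w K) :
    ∀ f : ℂ[X], ‖f.eval w‖ ≤ polySup K f := by
  by_contra hcon
  push_neg at hcon
  obtain ⟨f, hf⟩ := hcon
  set a : ℝ := ‖f.eval w‖ with ha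
  set m : ℝ := polySup K f with hm
  set r : ℝ := ‖w - q‖ with hr
  set d : ℝ := Metric.infDist w K with hdd
  have hm0 : 0 ≤ m := polySup_nonneg K hK hne f
  have ha0 : 0 < a := lt_of_le_of_lt hm0 hf
  have hr0 : 0 ≤ r := norm_nonneg _
  have hd0 : 0 < d := lt_of_le_of_lt hr0 hd
  -- choose n with (m/a)^n < (d-r)/(d+r)
  have hma : m / a < 1 := (div_lt_one ha0).mpr hf
  have hma0 : 0 ≤ m / a := div_nonneg hm0 ha0.le
  have hε : 0 < (d - r) / (d + r) := div_pos (by linarith) (by linarith)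
  obtain ⟨n, hn⟩ := exists_pow_lt_of_lt_one hε hma
  -- the divided polynomial
  have hdvd : (X - C w) ∣ (f ^ n - C (f.eval w ^ n)) := by
    refine (dvd_iff_isRoot).mpr ?_
    simp [IsRoot, eval_pow]
  obtain ⟨g, hg⟩ := hdvd
  -- bound on K
  have hbK : ∀ z ∈ K, ‖g.eval z‖ ≤ (a ^ n + m ^ n) / d := by
    intro z hz
    have hdist : d ≤ ‖z - w‖ := by
      have := Metric.infDist_le_dist_of_mem (x := w) hz
      rwa [dist_eq_norm, norm_sub_rev] at this
    have heval : (f.eval z) ^ n - (f.eval w) ^ n = (z - w) * g.eval z := by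
      have := congrArg (Polynomial.eval z) hg
      simpa [eval_pow] using this
    have h1 : ‖(f.eval z) ^ n - (f.eval w) ^ n‖ ≤ m ^ n + a ^ n := by
      refine le_trans (norm_sub_le _ _) ?_
      gcongr
      · rw [norm_pow]
        exact pow_le_pow_left₀ (norm_nonneg _) (le_polySup K hK f hz) n
      · rw [norm_pow]
    have h2 : ‖z - w‖ * ‖g.eval z‖ ≤ m ^ n + a ^ n := by
      rw [← norm_mul, ← heval]; exact h1
    have h3 : d * ‖g.eval z‖ ≤ m ^ n + a ^ n := by
      refine le_trans ?_ h2
      gcongr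
    rw [le_div_iff₀ hd0]
    linarith [h3]
  have hgK : polySup K g ≤ (a ^ n + m ^ n) / d := polySup_le K hne hbK
  -- lower bound at q
  have hevalq : (f.eval q) ^ n - (f.eval w) ^ n = (q - w) * g.eval q := by
    have := congrArg (Polynomial.eval q) hg
    simpa [eval_pow] using this
  have hfq : ‖f.eval q‖ ≤ m := hq f
  have hlow : a ^ n - m ^ n ≤ ‖(f.eval q) ^ n - (f.eval w) ^ n‖ := by
    have h1 : ‖(f.eval w) ^ n‖ - ‖(f.eval q) ^ n‖ ≤ ‖(f.eval q) ^ n - (f.eval w) ^ n‖ := by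
      have := norm_sub_norm_le ((f.eval w) ^ n) ((f.eval q) ^ n)
      rwa [norm_sub_rev] at this
    have h2 : ‖(f.eval q) ^ n‖ ≤ m ^ n := by
      rw [norm_pow]; exact pow_le_pow_left₀ (norm_nonneg _) hfq n
    have h3 : ‖(f.eval w) ^ n‖ = a ^ n := by rw [norm_pow]
    linarith
  have hup : ‖(f.eval q) ^ n - (f.eval w) ^ n‖ ≤ r * ((a ^ n + m ^ n) / d) := by
    rw [hevalq, norm_mul]
    have hqw : ‖q - w‖ = r := by rw [norm_sub_rev]
    rw [hqw]
    gcongr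
    exact le_trans (hq g) hgK
  -- contradiction
  have hineq : (a ^ n - m ^ n) * d ≤ r * (a ^ n + m ^ n) := by
    have h := le_trans hlow hup
    rw [mul_div_assoc'] at h
    exact (le_div_iff₀ hd0).mp h
  have hman : m ^ n = (m / a) ^ n * a ^ n := by
    rw [div_pow]; field_simp
  have han : 0 < a ^ n := pow_pos ha0 n
  have hn' : (m / a) ^ n * (d + r) < d - r :=
    (lt_div_iff₀ (by linarith : (0:ℝ) < d + r)).mp hn
  nlinarith [hn', hineq, han, hman]

/-- A compact set `K ⊆ ℂ` with connected complement is polynomially convex: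
every point `p ∉ K` is separated from `K` by a polynomial. -/
theorem stmt7 (K : Set ℂ) (hK : IsCompact K) (hc : IsConnected Kᶜ)
    (p : ℂ) (hp : p ∉ K) :
    ∃ f : Polynomial ℂ, ‖f.eval p‖ > sSup ((fun z => ‖f.eval z‖) '' K) := by
  rcases K.eq_empty_or_nonempty with hKe | hne
  · refine ⟨1, ?_⟩
    simp [hKe, Real.sSup_empty]
  by_contra hcon
  push_neg at hcon
  have hpH : ∀ f : ℂ[X], ‖f.eval p‖ ≤ polySup K f := hcon
  set H : Set ℂ := {q | ∀ f : ℂ[X], ‖f.eval q‖ ≤ polySup K f} with hH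
  have hHclosed : IsClosed H := by
    have : H = ⋂ f : ℂ[X], {q | ‖f.eval q‖ ≤ polySup K f} := by
      ext q; simp [hH]
    rw [this]
    exact isClosed_iInter fun f =>
      isClosed_le f.continuous.norm continuous_const
  -- open set v = Kᶜ ∩ H
  have hVopen : IsOpen (Kᶜ ∩ H) := by
    rw [Metric.isOpen_iff]
    rintro q ⟨hqK, hqH⟩
    have hδ : 0 < Metric.infDist q K :=
      ((hK.isClosed.notMem_iff_infDist_pos hne).mp hqK)
    refine ⟨Metric.infDist q K / 2, by linarith, ?_⟩
    intro w hw
    rw [Metric.mem_ball] at hw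
    have hwd : Metric.infDist q K - dist w q ≤ Metric.infDist w K := by
      have := Metric.infDist_le_infDist_add_dist (x := q) (y := w) (s := K)
      rw [dist_comm] at this
      linarith
    have hdw : ‖w - q‖ < Metric.infDist w K := by
      rw [← dist_eq_norm]
      linarith
    have hwK : w ∉ K := by
      intro hmem
      have : Metric.infDist w K = 0 := by
        simp [Metric.infDist_zero_of_mem hmem]
      linarith [norm_nonneg (w - q), hdw, this]
    exact ⟨hwK, key K hK hne hqH hdw⟩
  -- far point in Hᶜ ∩ Kᶜ
  obtain ⟨Cb, hCb⟩ := hK.isBounded.exists_norm_le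
  have hCb0 : 0 ≤ Cb := by
    obtain ⟨z, hz⟩ := hne
    exact le_trans (norm_nonneg z) (hCb z hz)
  set w0 : ℂ := ((Cb + 1 : ℝ) : ℂ) with hw0
  have hw0n : ‖w0‖ = Cb + 1 := by
    rw [hw0, Complex.norm_real, Real.norm_of_nonneg (by linarith)]
  have hw0K : w0 ∉ K := by
    intro h
    have := hCb w0 h
    rw [hw0n] at this
    linarith
  have hw0H : w0 ∉ H := by
    intro h
    have h1 := h X
    have h2 : polySup K (X : ℂ[X]) ≤ Cb := polySup_le K hne (by simpa using hCb)
    rw [eval_X, hw0n] at h1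
    linarith
  -- connectivity
  have hpre := hc.isPreconnected
  have hcover : Kᶜ ⊆ Hᶜ ∪ (Kᶜ ∩ H) := by
    intro q hq
    by_cases h : q ∈ H
    · exact Or.inr ⟨hq, h⟩
    · exact Or.inl h
  have h1 : (Kᶜ ∩ Hᶜ).Nonempty := ⟨w0, hw0K, hw0H⟩
  have h2 : (Kᶜ ∩ (Kᶜ ∩ H)).Nonempty := ⟨p, hp, hp, hpH⟩
  obtain ⟨x, _, hxu, _, hxH⟩ :=
    hpre _ _ hHclosed.isOpen_compl hVopen hcover h1 h2
  exact hxu hxH
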